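/- Let d ≥ 3 and let ε = (ε_0, …, ε_d) be a bijection from ZMod (d+1) to {0,…,d} with ε_d = d. Suppose the colors ε_0, ε_{d−1} and a third color c ∈ {0,…,d−1} \ {ε_0, ε_{d−1}} all satisfy the path condition, and assume the identity ∂g_{ε_0 c} + ∂g_{c ε_{d−1}} + ∂g_{ε_0 ε_{d−1}} = 2·∂g_{ε_0 ε_{d−1} c} + p̄ holds (this identity is valid whenever the boundary graph represents a closed manifold). Then ρ_ε(Γ̃^{(c)}) = ρ_ε(Γ) + ∂g_{ε_0 ε_{d−1}} − ∂g_{ε_0 ε_{d−1} c}. -/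

import Mathlib

/-!
Capping changes only the two terms of the cyclic sum that involve the color `d`, namely those
of the pairs `(ε_{d-1}, d)` and `(d, ε_0)`. For a color `s` satisfying the path condition, the
orbits of `⟨π_s, π̃⟩` are the `⟨π_s, π_d⟩`-orbits avoiding the boundary together with one orbit
for each `⟨∂π_s, ∂π_c⟩`-orbit on the boundary. Indeed every `⟨π_s, π_d⟩`-step is also a
`⟨π_s, π̃⟩`-step, since `π̃ = π_d` off the boundary and `π_d` fixes the boundary pointwise; so
`∂π_s x` lies in the `⟨π_s, π̃⟩`-orbit of `x`, and by the path condition it is the only other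
boundary point of the `⟨π_s, π_d⟩`-orbit of `x`. Hence `g̃_{ε_0 d} = ġ_{ε_0 d} + ∂g_{ε_0 c}` and
`g̃_{ε_{d-1} d} = ġ_{ε_{d-1} d} + ∂g_{c ε_{d-1}}`, and the boundary identity turns the difference
of the two genus formulas into `2 (∂g_{ε_0 ε_{d−1} c} − ∂g_{ε_0 ε_{d−1}})`.
-/

/-- The number of orbits on `V` of the subgroup of the symmetric group on `V`
generated by a set `S` of permutations. -/
noncomputable def numOrbits {V : Type*} [Fintype V] (S : Set (Equiv.Perm V)) : ℕ :=
  Nat.card (MulAction.orbitRel.Quotient (Subgroup.closure S) V)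

/-- The number of orbits on `V` of the subgroup generated by `S` that are disjoint
from a given set `F`. -/
noncomputable def numOrbitsAway {V : Type*} [Fintype V] (S : Set (Equiv.Perm V))
    (F : Set V) : ℕ :=
  Nat.card {ω : MulAction.orbitRel.Quotient (Subgroup.closure S) V // ω.orbit ∩ F = ∅}

open MulAction Equiv Set Subgroup
open scoped Pointwise

section Orbits

variable {α : Type*}

/-- A permutation mapping the finite set `T` into itself maps it onto itself, so each
generator lies in the stabilizer of `T`. -/
theorem orbit_closure_subset_of_mapsTo [Finite α] {S : Set (Perm α)} {T : Set α}
    (hT : ∀ u ∈ S, MapsTo u T T) {x : α} (hx : x ∈ T) : orbit (closure S) x ⊆ T := by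
  have hS : closure S ≤ stabilizer (Perm α) T := by
    refine closure_le _ |>.2 fun u hu => ?_
    have hbij := (T.toFinite.injOn_iff_bijOn_of_mapsTo (hT u hu)).1 u.injective.injOn
    rw [SetLike.mem_coe, mem_stabilizer_iff, ← Set.image_smul]
    exact hbij.image_eq
  rintro _ ⟨g, rfl⟩
  exact (mem_stabilizer_set.1 (hS g.2) x).2 hx

theorem apply_mem_orbit_closure {S : Set (Perm α)} {u : Perm α} (hu : u ∈ S) {x y : α}
    (hy : y ∈ orbit (closure S) x) : u y ∈ orbit (closure S) x :=
  orbit_eq_iff.2 hy ▸ mem_orbit y (⟨u, subset_closure hu⟩ : closure S)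

end Orbits

section OrbitCounting

variable {G H α β : Type*} [Group G] [MulAction G α] [Group H] [MulAction H β]

theorem card_orbitRel_quotient_eq_add [Finite α] (F : Set α) :
    Nat.card (orbitRel.Quotient G α) = Nat.card {ω : orbitRel.Quotient G α // ω.orbit ∩ F = ∅}
      + Nat.card {ω : orbitRel.Quotient G α // (ω.orbit ∩ F).Nonempty} := by
  simp_rw [nonempty_iff_ne_empty]
  rw [← Nat.card_sum, Nat.card_congr (Equiv.sumCompl _)]

theorem card_orbits_inter_eq_empty (F : Set α) :
    Nat.card {ω : orbitRel.Quotient G α // ω.orbit ∩ F = ∅}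
      = {O : Set α | O ∩ F = ∅ ∧ ∃ x, orbit G x = O}.ncard := by
  have himage : orbitRel.Quotient.orbit '' {ω : orbitRel.Quotient G α | ω.orbit ∩ F = ∅}
      = {O | O ∩ F = ∅ ∧ ∃ x, orbit G x = O} := by
    ext O
    constructor
    · rintro ⟨ω, hω, rfl⟩
      induction ω using Quotient.inductionOn' with | h x => exact ⟨hω, x, rfl⟩
    · rintro ⟨hO, x, rfl⟩
      exact ⟨Quotient.mk'' x, hO, rfl⟩
  rw [← himage, ncard_image_of_injective _ orbitRel.Quotient.orbit_injective]
  rfl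

theorem card_orbits_inter_eq_empty_congr (G' : Type*) [Group G'] [MulAction G' α] {F : Set α}
    (h : ∀ x, orbit G x ∩ F = ∅ ∨ orbit G' x ∩ F = ∅ → orbit G x = orbit G' x) :
    Nat.card {ω : orbitRel.Quotient G α // ω.orbit ∩ F = ∅}
      = Nat.card {ω : orbitRel.Quotient G' α // ω.orbit ∩ F = ∅} := by
  rw [card_orbits_inter_eq_empty, card_orbits_inter_eq_empty]
  congr 1
  ext O
  constructor
  · rintro ⟨hO, x, rfl⟩
    exact ⟨hO, x, (h x (.inl hO)).symm⟩
  · rintro ⟨hO, x, rfl⟩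
    exact ⟨hO, x, h x (.inr hO)⟩

theorem card_orbitRel_quotient_eq_of_mem_orbit_iff (f : β → α)
    (hf : ∀ x y, f y ∈ orbit G (f x) ↔ y ∈ orbit H x) :
    Nat.card (orbitRel.Quotient H β)
      = Nat.card {ω : orbitRel.Quotient G α // (ω.orbit ∩ range f).Nonempty} := by
  let ψ : orbitRel.Quotient H β → orbitRel.Quotient G α :=
    Quotient.map' f fun a b hab => (hf b a).2 hab
  have hψ : ψ.Injective := by
    intro ω₁ ω₂
    induction ω₁, ω₂ using Quotient.inductionOn₂' with
    | h a b => exact fun hab => Quotient.sound' ((hf b a).1 (Quotient.exact' hab))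
  have hrange : range ψ = {ω | (ω.orbit ∩ range f).Nonempty} := by
    ext ω
    constructor
    · rintro ⟨ω, rfl⟩
      induction ω using Quotient.inductionOn' with | h y => exact ⟨f y, mem_orbit_self _, y, rfl⟩
    · rintro ⟨_, hx, y, rfl⟩
      exact ⟨Quotient.mk'' y, orbitRel.Quotient.mem_orbit.1 hx⟩
  rw [← Nat.card_range_of_injective hψ, hrange]
  rfl

end OrbitCounting

section Capping

variable {α : Type*} {s q t : Perm α}

theorem orbit_subset_orbit_of_eq_off_fixedPoints [Finite α] (ht : ∀ x, q x ≠ x → t x = q x)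
    (x : α) : orbit (closure {s, q}) x ⊆ orbit (closure {s, t}) x := by
  refine orbit_closure_subset_of_mapsTo ?_ (mem_orbit_self x)
  rintro u (rfl | rfl) z hz
  · exact apply_mem_orbit_closure (by simp) hz
  · by_cases hqz : u z = z
    · rwa [hqz]
    · rw [← ht z hqz]
      exact apply_mem_orbit_closure (by simp) hz

theorem orbit_eq_of_inter_fixedPoints_eq_empty [Finite α] (ht : ∀ x, q x ≠ x → t x = q x)
    {x : α} (hx : orbit (closure {s, q}) x ∩ {y | q y = y} = ∅) :
    orbit (closure {s, t}) x = orbit (closure {s, q}) x := by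
  refine (orbit_closure_subset_of_mapsTo ?_ (mem_orbit_self x)).antisymm
    (orbit_subset_orbit_of_eq_off_fixedPoints ht x)
  rintro u (rfl | rfl) z hz
  · exact apply_mem_orbit_closure (by simp) hz
  · rw [ht z fun hqz => (eq_empty_iff_forall_notMem.1 hx) z ⟨hz, hqz⟩]
    exact apply_mem_orbit_closure (by simp) hz

def PathCondition (s q : Perm α) : Prop :=
  ∀ x, (orbit (closure {s, q}) x ∩ {y | q y = y}).ncard = 0 ∨
    (orbit (closure {s, q}) x ∩ {y | q y = y}).ncard = 2

/-- Under `PathCondition s q` this determines `bs`: `bs y` is the other fixed point of `q` in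
the `⟨s, q⟩`-orbit of `y`, i.e. `bs` is the boundary involution `∂π_s`. -/
def IsBoundaryPerm (s q : Perm α) (bs : Perm {y // q y = y}) : Prop :=
  ∀ y, bs y ≠ y ∧ (bs y : α) ∈ orbit (closure {s, q}) ↑y

theorem IsBoundaryPerm.of_capping {u : Perm α} {bs : Perm {y // q y = y}}
    (hbs : ∀ y, (bs y : α) = u y)
    (hu : ∀ x, q x = x → u x ≠ x ∧ u x ∈ orbit (closure {s, q}) x) :
    IsBoundaryPerm s q bs := fun y => by
  obtain ⟨hne, hmem⟩ := hu y y.2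
  exact ⟨fun h => hne (by rw [← hbs, h]), by rw [hbs]; exact hmem⟩

variable {bs bt : Perm {y // q y = y}}

theorem IsBoundaryPerm.eq_or_eq_of_mem_orbit [Finite α] (hbs : IsBoundaryPerm s q bs)
    (hpath : PathCondition s q) (y : {y // q y = y}) {z : α}
    (hz : z ∈ orbit (closure {s, q}) ↑y) (hqz : q z = z) : z = y ∨ z = bs y := by
  set O := orbit (closure {s, q}) (y : α) ∩ {y | q y = y}
  have hyO : (y : α) ∈ O := ⟨mem_orbit_self _, y.2⟩
  have hsub : {(y : α), (bs y : α)} ⊆ O := by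
    rintro _ (rfl | rfl)
    exacts [hyO, ⟨(hbs y).2, (bs y).2⟩]
  have hO : O.ncard = 2 := (hpath y).resolve_left ((ncard_pos O.toFinite).2 ⟨_, hyO⟩).ne'
  have hpair : ({(y : α), (bs y : α)} : Set α).ncard = 2 :=
    ncard_pair fun h => (hbs y).1 (Subtype.ext h).symm
  have := eq_of_subset_of_ncard_le hsub (hO.trans hpair.symm).le O.toFinite
  simpa [← this] using (show z ∈ O from ⟨hz, hqz⟩)

theorem val_mem_orbit_iff [Finite α] (ht : ∀ x, q x ≠ x → t x = q x)
    (hbt : ∀ y, (bt y : α) = t y) (hbs : IsBoundaryPerm s q bs) (hpath : PathCondition s q)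
    (x y : {y // q y = y}) :
    (y : α) ∈ orbit (closure {s, t}) ↑x ↔ y ∈ orbit (closure {bs, bt}) x := by
  constructor
  · set U := {z : α | ∃ w ∈ orbit (closure {bs, bt}) x, z ∈ orbit (closure {s, q}) ↑w}
    have hU : ∀ z ∈ U, q z = z → ∃ w ∈ orbit (closure {bs, bt}) x, z = w := by
      rintro z ⟨w, hw, hz⟩ hqz
      rcases hbs.eq_or_eq_of_mem_orbit hpath w hz hqz with rfl | rfl
      exacts [⟨w, hw, rfl⟩, ⟨bs w, apply_mem_orbit_closure (by simp) hw, rfl⟩]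
    have hsub : orbit (closure {s, t}) (x : α) ⊆ U := by
      refine orbit_closure_subset_of_mapsTo ?_ ⟨x, mem_orbit_self x, mem_orbit_self _⟩
      rintro u (rfl | rfl) z hzU
      · obtain ⟨w, hw, hz⟩ := hzU
        exact ⟨w, hw, apply_mem_orbit_closure (by simp) hz⟩
      · by_cases hqz : q z = z
        · obtain ⟨w, hw, rfl⟩ := hU z hzU hqz
          exact ⟨bt w, apply_mem_orbit_closure (by simp) hw, hbt w ▸ mem_orbit_self _⟩
        · obtain ⟨w, hw, hz⟩ := hzU
          exact ⟨w, hw, ht z hqz ▸ apply_mem_orbit_closure (by simp) hz⟩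
    intro hy
    obtain ⟨w, hw, hyw⟩ := hU y (hsub hy) y.2
    rwa [Subtype.ext hyw]
  · suffices orbit (closure {bs, bt}) x ⊆ {w | (w : α) ∈ orbit (closure {s, t}) ↑x} from
      fun hy => this hy
    refine orbit_closure_subset_of_mapsTo ?_ (mem_orbit_self (x : α))
    rintro u (rfl | rfl) w hw <;> rw [← orbit_eq_iff.2 hw]
    · exact orbit_subset_orbit_of_eq_off_fixedPoints ht _ (hbs w).2
    · change (u w : α) ∈ orbit (closure {s, t}) (w : α)
      rw [hbt]
      exact apply_mem_orbit_closure (by simp) (mem_orbit_self _)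

end Capping

theorem numOrbits_capped_eq_add {α : Type*} [Fintype α] [DecidableEq α] {s q t : Perm α}
    {bs bt : Perm {y // q y = y}}
    (ht : ∀ x, q x ≠ x → t x = q x) (hbt : ∀ y, (bt y : α) = t y)
    (hbs : IsBoundaryPerm s q bs) (hpath : PathCondition s q) :
    numOrbits {s, t} = numOrbitsAway {s, q} {y | q y = y} + numOrbits {bs, bt} := by
  have haway : ∀ x, orbit (closure {s, t}) x ∩ {y | q y = y} = ∅ ∨
      orbit (closure {s, q}) x ∩ {y | q y = y} = ∅ →
      orbit (closure {s, t}) x = orbit (closure {s, q}) x := by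
    refine fun x hx => orbit_eq_of_inter_fixedPoints_eq_empty ht (hx.elim (fun h => ?_) id)
    exact subset_empty_iff.1
      (h ▸ inter_subset_inter_left _ (orbit_subset_orbit_of_eq_off_fixedPoints ht x))
  unfold numOrbits numOrbitsAway
  rw [card_orbitRel_quotient_eq_add {y | q y = y},
    card_orbits_inter_eq_empty_congr _ haway,
    card_orbitRel_quotient_eq_of_mem_orbit_iff Subtype.val (val_mem_orbit_iff ht hbt hbs hpath),
    Subtype.range_coe_subtype]

section CyclicOrder

variable {n : ℕ} {ε : ZMod (n + 1) ≃ Fin (n + 1)}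

theorem ne_last_of_ne_natCast (hε : ε n = Fin.last n) {i : ZMod (n + 1)} (hi : i ≠ n) :
    ε i ≠ Fin.last n :=
  hε ▸ ε.injective.ne hi

theorem natCast_sub_one_ne_natCast (hn : n ≠ 0) : (n : ZMod (n + 1)) - 1 ≠ n :=
  have : Nontrivial (ZMod (n + 1)) := ZMod.nontrivial_iff.2 (by omega)
  fun h => one_ne_zero (sub_eq_self.1 h)

theorem zero_ne_natCast (hn : n ≠ 0) : (0 : ZMod (n + 1)) ≠ n := by
  have : Nontrivial (ZMod (n + 1)) := ZMod.nontrivial_iff.2 (by omega)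
  rw [eq_neg_of_add_eq_zero_left (ZMod.natCast_self' n)]
  exact (neg_ne_zero.2 one_ne_zero).symm

theorem sum_cycle_eq_add_of_eq_off_last {M : Type*} [AddCommGroup M] (hn : n ≠ 0)
    (hε : ε n = Fin.last n) {f g : Fin (n + 1) → Fin (n + 1) → M}
    (hfg : ∀ a b, a ≠ Fin.last n → b ≠ Fin.last n → f a b = g a b) :
    ∑ i, f (ε i) (ε (i + 1)) = ∑ i, g (ε i) (ε (i + 1))
      + (f (ε (n - 1)) (Fin.last n) - g (ε (n - 1)) (Fin.last n))
      + (f (Fin.last n) (ε 0) - g (Fin.last n) (ε 0)) := by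
  have hdiff := Fintype.sum_eq_add (f := fun i => f (ε i) (ε (i + 1)) - g (ε i) (ε (i + 1)))
    _ _ (natCast_sub_one_ne_natCast hn) fun i ⟨hi₁, hi₂⟩ => sub_eq_zero.2 <|
      hfg _ _ (ne_last_of_ne_natCast hε hi₂)
        (ne_last_of_ne_natCast hε fun h => hi₁ (eq_sub_of_add_eq h))
  simp only [sub_add_cancel, ZMod.natCast_self', hε, Finset.sum_sub_distrib] at hdiff
  rw [add_assoc, ← hdiff, add_sub_cancel]

end CyclicOrder

theorem capped_regularGenus_of_not_mem_ends_general
    {V : Type*} [Fintype V] [DecidableEq V] (d : ℕ) (hd : 3 ≤ d)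
    (π : Fin (d + 1) → Equiv.Perm V)
    (pbar pdot p : ℕ)
    (hp : p = pdot + pbar)
    (ε : ZMod (d + 1) ≃ Fin (d + 1))
    (hεd : ε (d : ZMod (d + 1)) = Fin.last d)
    -- the colors `ε_0`, `ε_{d−1}` and `c` satisfy the path condition
    (hpath0 : ∀ x : V,
      (MulAction.orbit (Subgroup.closure {π (ε 0), π (Fin.last d)}) x
          ∩ {y : V | π (Fin.last d) y = y}).ncard = 0 ∨
      (MulAction.orbit (Subgroup.closure {π (ε 0), π (Fin.last d)}) x
          ∩ {y : V | π (Fin.last d) y = y}).ncard = 2)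
    (hpath1 : ∀ x : V,
      (MulAction.orbit (Subgroup.closure {π (ε ((d : ZMod (d + 1)) - 1)),
            π (Fin.last d)}) x
          ∩ {y : V | π (Fin.last d) y = y}).ncard = 0 ∨
      (MulAction.orbit (Subgroup.closure {π (ε ((d : ZMod (d + 1)) - 1)),
            π (Fin.last d)}) x
          ∩ {y : V | π (Fin.last d) y = y}).ncard = 2)
    -- the capped involutions for the colors `ε_0`, `ε_{d−1}` and `c`
    (t0 t1 tc : Equiv.Perm V)
    (ht0_fix : ∀ x : V, π (Fin.last d) x = x →
      π (Fin.last d) (t0 x) = t0 x ∧ t0 x ≠ x ∧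
      t0 x ∈ MulAction.orbit (Subgroup.closure {π (ε 0), π (Fin.last d)}) x)
    (ht1_fix : ∀ x : V, π (Fin.last d) x = x →
      π (Fin.last d) (t1 x) = t1 x ∧ t1 x ≠ x ∧
      t1 x ∈ MulAction.orbit (Subgroup.closure {π (ε ((d : ZMod (d + 1)) - 1)),
        π (Fin.last d)}) x)
    (htc_out : ∀ x : V, π (Fin.last d) x ≠ x → tc x = π (Fin.last d) x)
    -- the boundary involutions `∂π_{ε_0}`, `∂π_{ε_{d−1}}` and `∂π_c`
    (b0 b1 bc : Equiv.Perm {y : V // π (Fin.last d) y = y})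
    (hb0 : ∀ y : {y : V // π (Fin.last d) y = y}, (b0 y : V) = t0 y)
    (hb1 : ∀ y : {y : V // π (Fin.last d) y = y}, (b1 y : V) = t1 y)
    (hbc : ∀ y : {y : V // π (Fin.last d) y = y}, (bc y : V) = tc y)
    -- the identity `∂g_{ε_0 c} + ∂g_{c ε_{d−1}} + ∂g_{ε_0 ε_{d−1}}
    --   = 2·∂g_{ε_0 ε_{d−1} c} + p̄`
    (hbdry : numOrbits {b0, bc} + numOrbits {bc, b1} + numOrbits {b0, b1}
      = 2 * numOrbits {b0, b1, bc} + pbar)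
    -- the capped regular graph `Γ̃^{(c)}`
    (πcap : Fin (d + 1) → Equiv.Perm V)
    (hπcap : ∀ j : Fin (d + 1), πcap j = if j = Fin.last d then tc else π j)
    -- `ġ_{ab}`
    (gdot : Fin (d + 1) → Fin (d + 1) → ℕ)
    (hgdot_last : ∀ a : Fin (d + 1),
      gdot a (Fin.last d)
          = numOrbitsAway {π a, π (Fin.last d)} {y : V | π (Fin.last d) y = y} ∧
      gdot (Fin.last d) a
          = numOrbitsAway {π (Fin.last d), π a} {y : V | π (Fin.last d) y = y})
    (hgdot : ∀ a b : Fin (d + 1), a ≠ Fin.last d → b ≠ Fin.last d →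
      gdot a b = numOrbits {π a, π b})
    -- the regular genus of `Γ` with respect to `ε`
    (ρ : ℚ)
    (hρ : 2 - 2 * ρ = (∑ i : ZMod (d + 1), (gdot (ε i) (ε (i + 1)) : ℚ))
      + (1 - (d : ℚ)) * (pdot : ℚ) + (2 - (d : ℚ)) * (pbar : ℚ)
      + (numOrbits {b0, b1} : ℚ))
    -- the regular genus of `Γ̃^{(c)}` with respect to `ε`
    (ρcap : ℚ)
    (hρcap : 2 - 2 * ρcap
      = (∑ i : ZMod (d + 1), (numOrbits {πcap (ε i), πcap (ε (i + 1))} : ℚ))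
        + (1 - (d : ℚ)) * (p : ℚ)) :
    ρcap = ρ + (numOrbits {b0, b1} : ℚ) - (numOrbits {b0, b1, bc} : ℚ) := by
  have hd0 : d ≠ 0 := by omega
  have hε0 := ne_last_of_ne_natCast hεd (zero_ne_natCast hd0)
  have hε1 := ne_last_of_ne_natCast hεd (natCast_sub_one_ne_natCast hd0)
  have hcap : ∀ j, j ≠ Fin.last d → πcap j = π j := fun j hj => by rw [hπcap, if_neg hj]
  have hcap_last : πcap (Fin.last d) = tc := by rw [hπcap, if_pos rfl]
  have hsum := sum_cycle_eq_add_of_eq_off_last (M := ℚ) hd0 hεd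
    (f := fun a b => (numOrbits {πcap a, πcap b} : ℚ)) (g := fun a b => (gdot a b : ℚ))
    fun a b ha hb => by rw [hcap a ha, hcap b hb, hgdot a b ha hb]
  have h0 := numOrbits_capped_eq_add htc_out hbc
    (.of_capping hb0 fun x hx => (ht0_fix x hx).2) hpath0
  have h1 := numOrbits_capped_eq_add htc_out hbc
    (.of_capping hb1 fun x hx => (ht1_fix x hx).2) hpath1
  rw [hcap_last, hcap _ hε0, hcap _ hε1, (hgdot_last _).1, (hgdot_last _).2,
    Set.pair_comm tc, Set.pair_comm (π (Fin.last d)), h0, h1, Set.pair_comm b1] at hsum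
  rw [hsum, hp] at hρcap
  have hbdry' : (numOrbits {b0, bc} + numOrbits {bc, b1} + numOrbits {b0, b1} : ℚ)
      = 2 * numOrbits {b0, b1, bc} + pbar := by exact_mod_cast hbdry
  push_cast at hρcap
  linarith

/-- Let `d ≥ 3` and let `Γ = (π 0, …, π d)` be a `(d+1)`-colored graph with boundary,
with `2p̄ = |Fix(π d)|`, `2ṗ = |V| − 2p̄`, `p = ṗ + p̄`.  Let `ε` be a bijection
`ZMod (d+1) ≃ Fin (d+1)` with `ε_d = d`, and suppose the colors `ε_0`, `ε_{d−1}` and a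
third color `c ∉ {ε_0, ε_{d−1}, d}` all satisfy the path condition, and that
`∂g_{ε_0 c} + ∂g_{c ε_{d−1}} + ∂g_{ε_0 ε_{d−1}} = 2·∂g_{ε_0 ε_{d−1} c} + p̄`.
Then `ρ_ε(Γ̃^{(c)}) = ρ_ε(Γ) + ∂g_{ε_0 ε_{d−1}} − ∂g_{ε_0 ε_{d−1} c}`. -/
theorem capped_regularGenus_of_not_mem_ends
    {V : Type*} [Fintype V] [DecidableEq V] (d : ℕ) (hd : 3 ≤ d)
    (π : Fin (d + 1) → Equiv.Perm V)
    (hinv : ∀ j, π j * π j = 1)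
    (hfpf : ∀ j : Fin (d + 1), j ≠ Fin.last d → ∀ x, π j x ≠ x)
    (pbar pdot p : ℕ)
    (hpbar : Nat.card {y : V | π (Fin.last d) y = y} = 2 * pbar)
    (hpdot : Fintype.card V = 2 * pdot + 2 * pbar)
    (hp : p = pdot + pbar)
    (ε : ZMod (d + 1) ≃ Fin (d + 1))
    (hεd : ε (d : ZMod (d + 1)) = Fin.last d)
    (c : Fin (d + 1)) (hc_ne : c ≠ Fin.last d)
    (hc0 : c ≠ ε 0) (hc1 : c ≠ ε ((d : ZMod (d + 1)) - 1))
    -- the colors `ε_0`, `ε_{d−1}` and `c` satisfy the path condition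
    (hpath0 : ∀ x : V,
      (MulAction.orbit (Subgroup.closure {π (ε 0), π (Fin.last d)}) x
          ∩ {y : V | π (Fin.last d) y = y}).ncard = 0 ∨
      (MulAction.orbit (Subgroup.closure {π (ε 0), π (Fin.last d)}) x
          ∩ {y : V | π (Fin.last d) y = y}).ncard = 2)
    (hpath1 : ∀ x : V,
      (MulAction.orbit (Subgroup.closure {π (ε ((d : ZMod (d + 1)) - 1)),
            π (Fin.last d)}) x
          ∩ {y : V | π (Fin.last d) y = y}).ncard = 0 ∨
      (MulAction.orbit (Subgroup.closure {π (ε ((d : ZMod (d + 1)) - 1)),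
            π (Fin.last d)}) x
          ∩ {y : V | π (Fin.last d) y = y}).ncard = 2)
    (hpathc : ∀ x : V,
      (MulAction.orbit (Subgroup.closure {π c, π (Fin.last d)}) x
          ∩ {y : V | π (Fin.last d) y = y}).ncard = 0 ∨
      (MulAction.orbit (Subgroup.closure {π c, π (Fin.last d)}) x
          ∩ {y : V | π (Fin.last d) y = y}).ncard = 2)
    -- the capped involutions for the colors `ε_0`, `ε_{d−1}` and `c`
    (t0 t1 tc : Equiv.Perm V)
    (ht0_inv : t0 * t0 = 1) (ht0_fpf : ∀ x, t0 x ≠ x)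
    (ht0_out : ∀ x : V, π (Fin.last d) x ≠ x → t0 x = π (Fin.last d) x)
    (ht0_fix : ∀ x : V, π (Fin.last d) x = x →
      π (Fin.last d) (t0 x) = t0 x ∧ t0 x ≠ x ∧
      t0 x ∈ MulAction.orbit (Subgroup.closure {π (ε 0), π (Fin.last d)}) x)
    (ht1_inv : t1 * t1 = 1) (ht1_fpf : ∀ x, t1 x ≠ x)
    (ht1_out : ∀ x : V, π (Fin.last d) x ≠ x → t1 x = π (Fin.last d) x)
    (ht1_fix : ∀ x : V, π (Fin.last d) x = x →
      π (Fin.last d) (t1 x) = t1 x ∧ t1 x ≠ x ∧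
      t1 x ∈ MulAction.orbit (Subgroup.closure {π (ε ((d : ZMod (d + 1)) - 1)),
        π (Fin.last d)}) x)
    (htc_inv : tc * tc = 1) (htc_fpf : ∀ x, tc x ≠ x)
    (htc_out : ∀ x : V, π (Fin.last d) x ≠ x → tc x = π (Fin.last d) x)
    (htc_fix : ∀ x : V, π (Fin.last d) x = x →
      π (Fin.last d) (tc x) = tc x ∧ tc x ≠ x ∧
      tc x ∈ MulAction.orbit (Subgroup.closure {π c, π (Fin.last d)}) x)
    -- the boundary involutions `∂π_{ε_0}`, `∂π_{ε_{d−1}}` and `∂π_c`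
    (b0 b1 bc : Equiv.Perm {y : V // π (Fin.last d) y = y})
    (hb0 : ∀ y : {y : V // π (Fin.last d) y = y}, (b0 y : V) = t0 y)
    (hb1 : ∀ y : {y : V // π (Fin.last d) y = y}, (b1 y : V) = t1 y)
    (hbc : ∀ y : {y : V // π (Fin.last d) y = y}, (bc y : V) = tc y)
    -- the identity `∂g_{ε_0 c} + ∂g_{c ε_{d−1}} + ∂g_{ε_0 ε_{d−1}}
    --   = 2·∂g_{ε_0 ε_{d−1} c} + p̄`
    (hbdry : numOrbits {b0, bc} + numOrbits {bc, b1} + numOrbits {b0, b1}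
      = 2 * numOrbits {b0, b1, bc} + pbar)
    -- the capped regular graph `Γ̃^{(c)}`
    (πcap : Fin (d + 1) → Equiv.Perm V)
    (hπcap : ∀ j : Fin (d + 1), πcap j = if j = Fin.last d then tc else π j)
    -- `ġ_{ab}`
    (gdot : Fin (d + 1) → Fin (d + 1) → ℕ)
    (hgdot_last : ∀ a : Fin (d + 1),
      gdot a (Fin.last d)
          = numOrbitsAway {π a, π (Fin.last d)} {y : V | π (Fin.last d) y = y} ∧
      gdot (Fin.last d) a
          = numOrbitsAway {π (Fin.last d), π a} {y : V | π (Fin.last d) y = y})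
    (hgdot : ∀ a b : Fin (d + 1), a ≠ Fin.last d → b ≠ Fin.last d →
      gdot a b = numOrbits {π a, π b})
    -- the regular genus of `Γ` with respect to `ε`
    (ρ : ℚ)
    (hρ : 2 - 2 * ρ = (∑ i : ZMod (d + 1), (gdot (ε i) (ε (i + 1)) : ℚ))
      + (1 - (d : ℚ)) * (pdot : ℚ) + (2 - (d : ℚ)) * (pbar : ℚ)
      + (numOrbits {b0, b1} : ℚ))
    -- the regular genus of `Γ̃^{(c)}` with respect to `ε`
    (ρcap : ℚ)
    (hρcap : 2 - 2 * ρcap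
      = (∑ i : ZMod (d + 1), (numOrbits {πcap (ε i), πcap (ε (i + 1))} : ℚ))
        + (1 - (d : ℚ)) * (p : ℚ)) :
    ρcap = ρ + (numOrbits {b0, b1} : ℚ) - (numOrbits {b0, b1, bc} : ℚ) :=
  capped_regularGenus_of_not_mem_ends_general d hd π pbar pdot p hp ε hεd hpath0 hpath1 t0 t1 tc
    ht0_fix ht1_fix htc_out b0 b1 bc hb0 hb1 hbc hbdry πcap hπcap gdot hgdot_last hgdot ρ hρ ρcap
    hρcap
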